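/- Let V_1 and V_2 be disjoint finite nonempty sets of positive integers with min V_1 < min V_2, let T_1 be an unordered increasing tree with label set V_1 and T_2 an unordered increasing tree with label set V_2, and let T_2 • T_1 be the grafting of T_2 on T_1. Then wt(T_2 • T_1) = wt(T_1) · wt(T_2) · k_{min V_1} · (K_{V_2} − |V_2| + 1), where K_{V_2} = Σ_{u ∈ V_2} k_u, as an identity in ℚ[(k_v)]. -/

import Mathlib

/-!
Grafting changes no hook except that of the root `min V₁`: an ancestor chain starting in `V₁`
never leaves `V₁`, and one starting in `V₂` follows `T₂` until it jumps from `min V₂` to `min V₁`.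
So the factors of `wt(T₂ • T₁)` indexed by `V₁ ∖ {min V₁}` and `V₂ ∖ {min V₂}` are those of
`wt(T₁)` and `wt(T₂)`, and the one remaining factor, at `min V₂`, has father `min V₁` and hook
all of `V₂`.
-/

open scoped Classical

/-- The root label of a tree with label set `V`, namely `min V` (junk value `0` if `V = ∅`). -/
def rootOf (V : Finset ℕ) : ℕ := V.min.untopD 0

/-- An unordered increasing tree with label set `V`, encoded by a (total) parent function
`f : ℕ → ℕ`: every non-root vertex `v ∈ V` has a father `f v ∈ V` with `f v < v`;
as a normalization, `f` is the identity on the root and outside `V`. -/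
def IsIncTree (V : Finset ℕ) (f : ℕ → ℕ) : Prop :=
  (∀ v ∈ V, if v = rootOf V then f v = v else f v ∈ V ∧ f v < v) ∧ ∀ v, v ∉ V → f v = v

/-- The hook of a vertex `v` in the tree with label set `V` and parent function `f`:
the set of `u ∈ V` consisting of `v` and its descendants (`u` is a descendant of `v` if
iterating `f` starting from `u` reaches `v`). -/
noncomputable def hookN (V : Finset ℕ) (f : ℕ → ℕ) (v : ℕ) : Finset ℕ :=
  V.filter fun u => ∃ n, f^[n] u = v

/-- The weight of an unordered increasing tree with label set `V` and parent function `f`: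
`wt(T) = ∏_{v ∈ V, v ≠ min V} k_{f(v)} · ((Σ_{u ∈ 𝔥_T(v)} k_u) − h_T(v) + 1)`,
in the polynomial ring `ℚ[(k_v)]` (the variable `v : ℕ` is `k_v`). -/
noncomputable def wtN (V : Finset ℕ) (f : ℕ → ℕ) : MvPolynomial ℕ ℚ :=
  ∏ v ∈ V.erase (rootOf V),
    MvPolynomial.X (f v) *
      ((∑ u ∈ hookN V f v, MvPolynomial.X u) - ((hookN V f v).card : MvPolynomial ℕ ℚ) + 1)

open Finset

theorem Set.EqOn.iterate_of_mapsTo {α : Type*} {f g : α → α} {s : Set α}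
    (h : Set.EqOn f g s) (hs : Set.MapsTo f s s) (n : ℕ) : Set.EqOn f^[n] g^[n] s := by
  induction n with
  | zero => exact fun _ _ => rfl
  | succ n ih =>
    intro x hx
    rw [Function.iterate_succ_apply', Function.iterate_succ_apply', ← ih hx,
      h (hs.iterate n hx)]

lemma exists_iterate_eq_of_forall_ne_lt {α : Type*} [Preorder α] [WellFoundedLT α] {s : Set α}
    {f : α → α} {r : α} (hf : ∀ v ∈ s, v ≠ r → f v ∈ s ∧ f v < v) :
    ∀ u ∈ s, ∃ n, f^[n] u = r := by
  intro u
  induction u using WellFoundedLT.induction with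
  | _ u ih =>
    intro hu
    by_cases hr : u = r
    · exact ⟨0, hr⟩
    · obtain ⟨hfu, hlt⟩ := hf u hu hr
      obtain ⟨n, hn⟩ := ih (f u) hlt hfu
      exact ⟨n + 1, by rw [Function.iterate_succ_apply, hn]⟩

lemma rootOf_eq_min' {V : Finset ℕ} (h : V.Nonempty) : rootOf V = V.min' h := by
  rw [rootOf, ← coe_min' h, WithTop.untopD_coe]

lemma rootOf_mem {V : Finset ℕ} (h : V.Nonempty) : rootOf V ∈ V := by
  rw [rootOf_eq_min' h]
  exact V.min'_mem h

lemma rootOf_le {V : Finset ℕ} {v : ℕ} (hv : v ∈ V) : rootOf V ≤ v := by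
  rw [rootOf_eq_min' ⟨v, hv⟩]
  exact min'_le V v hv

lemma rootOf_union_of_lt {V₁ V₂ : Finset ℕ} (h₁ : V₁.Nonempty) (hlt : rootOf V₁ < rootOf V₂) :
    rootOf (V₁ ∪ V₂) = rootOf V₁ := by
  refine le_antisymm (rootOf_le (mem_union_left _ (rootOf_mem h₁))) ?_
  rcases mem_union.mp (rootOf_mem (h₁.mono subset_union_left)) with h | h
  · exact rootOf_le h
  · exact hlt.le.trans (rootOf_le h)

namespace IsIncTree

variable {V : Finset ℕ} {f : ℕ → ℕ}

lemma map_lt (hf : IsIncTree V f) {v : ℕ} (hv : v ∈ V) (hr : v ≠ rootOf V) :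
    f v ∈ V ∧ f v < v := by
  simpa only [if_neg hr] using hf.1 v hv

lemma map_root (hf : IsIncTree V f) : f (rootOf V) = rootOf V := by
  by_cases hr : rootOf V ∈ V
  · have h := hf.1 _ hr
    rwa [if_pos rfl] at h
  · exact hf.2 _ hr

lemma mapsTo (hf : IsIncTree V f) : Set.MapsTo f V V := by
  intro v hv
  by_cases hr : v = rootOf V
  · rwa [hr, hf.map_root, ← hr]
  · exact (hf.map_lt hv hr).1

lemma hookN_root (hf : IsIncTree V f) : hookN V f (rootOf V) = V :=
  filter_true_of_mem (exists_iterate_eq_of_forall_ne_lt fun _ hv hr => hf.map_lt hv hr)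

end IsIncTree

noncomputable def wtFactor (V : Finset ℕ) (f : ℕ → ℕ) (v : ℕ) : MvPolynomial ℕ ℚ :=
  MvPolynomial.X (f v) *
    ((∑ u ∈ hookN V f v, MvPolynomial.X u) - ((hookN V f v).card : MvPolynomial ℕ ℚ) + 1)

lemma wtN_eq_prod_wtFactor (V : Finset ℕ) (f : ℕ → ℕ) :
    wtN V f = ∏ v ∈ V.erase (rootOf V), wtFactor V f v :=
  rfl

def graft (V₁ V₂ : Finset ℕ) (f₁ f₂ : ℕ → ℕ) (v : ℕ) : ℕ :=
  if v ∈ V₂ then (if v = rootOf V₂ then rootOf V₁ else f₂ v) else f₁ v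

section Graft

variable {V₁ V₂ : Finset ℕ} {f₁ f₂ : ℕ → ℕ}

lemma graft_of_notMem {v : ℕ} (hv : v ∉ V₂) : graft V₁ V₂ f₁ f₂ v = f₁ v := if_neg hv

lemma graft_of_ne_root {v : ℕ} (hv : v ∈ V₂) (hr : v ≠ rootOf V₂) :
    graft V₁ V₂ f₁ f₂ v = f₂ v := by
  rw [graft, if_pos hv, if_neg hr]

lemma graft_root (hr₂ : rootOf V₂ ∈ V₂) : graft V₁ V₂ f₁ f₂ (rootOf V₂) = rootOf V₁ := by
  rw [graft, if_pos hr₂, if_pos rfl]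

lemma iterate_graft_of_mem_left (hdisj : Disjoint V₁ V₂) (hf₁ : IsIncTree V₁ f₁) {u : ℕ}
    (hu : u ∈ V₁) (n : ℕ) : (graft V₁ V₂ f₁ f₂)^[n] u = f₁^[n] u :=
  (Set.EqOn.iterate_of_mapsTo (fun _ hv => (graft_of_notMem (disjoint_left.mp hdisj hv)).symm)
    hf₁.mapsTo n hu).symm

lemma iterate_graft_of_mem_right (hr₁ : rootOf V₁ ∉ V₂) (hr₂ : rootOf V₂ ∈ V₂)
    (hf₁ : IsIncTree V₁ f₁) (hf₂ : IsIncTree V₂ f₂) {u : ℕ} (hu : u ∈ V₂) (n : ℕ) :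
    (graft V₁ V₂ f₁ f₂)^[n] u = f₂^[n] u ∨
      ((graft V₁ V₂ f₁ f₂)^[n] u = rootOf V₁ ∧ f₂^[n] u = rootOf V₂) := by
  induction n with
  | zero => exact Or.inl rfl
  | succ n ih =>
    simp only [Function.iterate_succ_apply']
    rcases ih with h | ⟨hg, hf⟩
    · rw [h]
      by_cases hr : f₂^[n] u = rootOf V₂
      · exact Or.inr ⟨hr ▸ graft_root hr₂, hr ▸ hf₂.map_root⟩
      · exact Or.inl (graft_of_ne_root (hf₂.mapsTo.iterate n hu) hr)
    · rw [hg, hf]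
      exact Or.inr ⟨(graft_of_notMem hr₁).trans hf₁.map_root, hf₂.map_root⟩

lemma hookN_graft_left (hdisj : Disjoint V₁ V₂) (hr₂ : rootOf V₂ ∈ V₂)
    (hf₁ : IsIncTree V₁ f₁) (hf₂ : IsIncTree V₂ f₂) {v : ℕ} (hv : v ∈ V₁) (hr : v ≠ rootOf V₁) :
    hookN (V₁ ∪ V₂) (graft V₁ V₂ f₁ f₂) v = hookN V₁ f₁ v := by
  have hr₁ : rootOf V₁ ∉ V₂ := disjoint_left.mp hdisj (rootOf_mem ⟨v, hv⟩)
  ext u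
  simp only [hookN, mem_filter, mem_union]
  constructor
  · rintro ⟨hu₁ | hu₂, n, hn⟩
    · exact ⟨hu₁, n, iterate_graft_of_mem_left hdisj hf₁ hu₁ n ▸ hn⟩
    · exfalso
      rcases iterate_graft_of_mem_right hr₁ hr₂ hf₁ hf₂ hu₂ n with h | ⟨h, -⟩
      · exact disjoint_left.mp hdisj hv (hn ▸ h ▸ hf₂.mapsTo.iterate n hu₂)
      · exact hr (hn ▸ h)
  · rintro ⟨hu₁, n, hn⟩
    exact ⟨Or.inl hu₁, n, (iterate_graft_of_mem_left hdisj hf₁ hu₁ n).trans hn⟩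

lemma hookN_graft_right (hdisj : Disjoint V₁ V₂) (hr₁ : rootOf V₁ ∉ V₂) (hr₂ : rootOf V₂ ∈ V₂)
    (hf₁ : IsIncTree V₁ f₁) (hf₂ : IsIncTree V₂ f₂) {v : ℕ} (hv : v ∈ V₂) :
    hookN (V₁ ∪ V₂) (graft V₁ V₂ f₁ f₂) v = hookN V₂ f₂ v := by
  ext u
  simp only [hookN, mem_filter, mem_union]
  constructor
  · rintro ⟨hu₁ | hu₂, n, hn⟩
    · exfalso
      rw [iterate_graft_of_mem_left hdisj hf₁ hu₁] at hn
      exact disjoint_left.mp hdisj (hn ▸ hf₁.mapsTo.iterate n hu₁) hv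
    · refine ⟨hu₂, n, ?_⟩
      rcases iterate_graft_of_mem_right hr₁ hr₂ hf₁ hf₂ hu₂ n with h | ⟨h, -⟩
      · rwa [← h]
      · rw [← hn, h] at hv
        exact absurd hv hr₁
  · rintro ⟨hu₂, n, hn⟩
    refine ⟨Or.inr hu₂, ?_⟩
    by_cases hvr : v = rootOf V₂
    · subst hvr
      refine exists_iterate_eq_of_forall_ne_lt (fun w hw hwr => ?_) u hu₂
      rw [graft_of_ne_root hw hwr]
      exact hf₂.map_lt hw hwr
    · rcases iterate_graft_of_mem_right hr₁ hr₂ hf₁ hf₂ hu₂ n with h | ⟨-, h⟩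
      · exact ⟨n, h.trans hn⟩
      · exact absurd (hn.symm.trans h) hvr

lemma wtFactor_graft_left (hdisj : Disjoint V₁ V₂) (hr₂ : rootOf V₂ ∈ V₂)
    (hf₁ : IsIncTree V₁ f₁) (hf₂ : IsIncTree V₂ f₂) {v : ℕ} (hv : v ∈ V₁.erase (rootOf V₁)) :
    wtFactor (V₁ ∪ V₂) (graft V₁ V₂ f₁ f₂) v = wtFactor V₁ f₁ v := by
  have hv₁ := mem_of_mem_erase hv
  rw [wtFactor, graft_of_notMem (disjoint_left.mp hdisj hv₁),
    hookN_graft_left hdisj hr₂ hf₁ hf₂ hv₁ (ne_of_mem_erase hv), wtFactor]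

lemma wtFactor_graft_right (hdisj : Disjoint V₁ V₂) (hr₁ : rootOf V₁ ∉ V₂)
    (hr₂ : rootOf V₂ ∈ V₂) (hf₁ : IsIncTree V₁ f₁) (hf₂ : IsIncTree V₂ f₂) {v : ℕ}
    (hv : v ∈ V₂.erase (rootOf V₂)) :
    wtFactor (V₁ ∪ V₂) (graft V₁ V₂ f₁ f₂) v = wtFactor V₂ f₂ v := by
  have hv₂ := mem_of_mem_erase hv
  rw [wtFactor, graft_of_ne_root hv₂ (ne_of_mem_erase hv),
    hookN_graft_right hdisj hr₁ hr₂ hf₁ hf₂ hv₂, wtFactor]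

lemma wtFactor_graft_root (hdisj : Disjoint V₁ V₂) (hr₁ : rootOf V₁ ∉ V₂)
    (hr₂ : rootOf V₂ ∈ V₂) (hf₁ : IsIncTree V₁ f₁) (hf₂ : IsIncTree V₂ f₂) :
    wtFactor (V₁ ∪ V₂) (graft V₁ V₂ f₁ f₂) (rootOf V₂) =
      MvPolynomial.X (rootOf V₁) *
        ((∑ u ∈ V₂, MvPolynomial.X u) - (V₂.card : MvPolynomial ℕ ℚ) + 1) := by
  rw [wtFactor, graft_root hr₂, hookN_graft_right hdisj hr₁ hr₂ hf₁ hf₂ hr₂, hf₂.hookN_root]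

end Graft

theorem stmt10_general (V₁ V₂ : Finset ℕ) (h₁ : V₁.Nonempty) (h₂ : V₂.Nonempty)
    (hdisj : Disjoint V₁ V₂)
    (hmin : rootOf V₁ < rootOf V₂)
    (f₁ f₂ : ℕ → ℕ) (hf₁ : IsIncTree V₁ f₁) (hf₂ : IsIncTree V₂ f₂) :
    wtN (V₁ ∪ V₂)
        (fun v => if v ∈ V₂ then (if v = rootOf V₂ then rootOf V₁ else f₂ v) else f₁ v)
      = wtN V₁ f₁ * wtN V₂ f₂ * MvPolynomial.X (rootOf V₁) *
          ((∑ u ∈ V₂, MvPolynomial.X u) - (V₂.card : MvPolynomial ℕ ℚ) + 1) := by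
  have hr₁ : rootOf V₁ ∉ V₂ := disjoint_left.mp hdisj (rootOf_mem h₁)
  have hr₂ : rootOf V₂ ∈ V₂ := rootOf_mem h₂
  have herase : (V₁ ∪ V₂).erase (rootOf V₁) = V₁.erase (rootOf V₁) ∪ V₂ := by
    rw [erase_union_distrib, erase_eq_of_notMem hr₁]
  change wtN (V₁ ∪ V₂) (graft V₁ V₂ f₁ f₂) = _
  rw [wtN_eq_prod_wtFactor, rootOf_union_of_lt h₁ hmin, herase,
    prod_union (hdisj.mono_left (erase_subset _ _)), ← mul_prod_erase V₂ _ hr₂,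
    wtFactor_graft_root hdisj hr₁ hr₂ hf₁ hf₂,
    prod_congr rfl fun v hv => wtFactor_graft_left hdisj hr₂ hf₁ hf₂ hv,
    prod_congr rfl fun v hv => wtFactor_graft_right hdisj hr₁ hr₂ hf₁ hf₂ hv,
    wtN_eq_prod_wtFactor, wtN_eq_prod_wtFactor]
  ring

/-- The grafting formula: if `T₁`, `T₂` are unordered increasing trees with disjoint label
sets `V₁`, `V₂` (of positive integers) and `min V₁ < min V₂`, then the grafting `T₂ • T₁`
(obtained by making the root of `T₂` a son of the root of `T₁`) satisfies
`wt(T₂ • T₁) = wt(T₁) · wt(T₂) · k_{min V₁} · (K_{V₂} − |V₂| + 1)`. -/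
theorem stmt10 (V₁ V₂ : Finset ℕ) (h₁ : V₁.Nonempty) (h₂ : V₂.Nonempty)
    (hdisj : Disjoint V₁ V₂) (hpos : ∀ v ∈ V₁ ∪ V₂, 0 < v)
    (hmin : rootOf V₁ < rootOf V₂)
    (f₁ f₂ : ℕ → ℕ) (hf₁ : IsIncTree V₁ f₁) (hf₂ : IsIncTree V₂ f₂) :
    wtN (V₁ ∪ V₂)
        (fun v => if v ∈ V₂ then (if v = rootOf V₂ then rootOf V₁ else f₂ v) else f₁ v)
      = wtN V₁ f₁ * wtN V₂ f₂ * MvPolynomial.X (rootOf V₁) *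
          ((∑ u ∈ V₂, MvPolynomial.X u) - (V₂.card : MvPolynomial ℕ ℚ) + 1) :=
  stmt10_general V₁ V₂ h₁ h₂ hdisj hmin f₁ f₂ hf₁ hf₂
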